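/- arXiv:1706.01266 — 2 statements merged into one kernel-verified Lean document; each statement's English description precedes it below -/
import Mathlib

section
/- Let p ≥ 3 be prime, a, b ∈ E_p with b ≠ 1, and x₀ ∈ E_p the fixed point of g(u) = a(b²u² + 1)/(b² + u²). Then |g'(x₀)|_p = |b⁴ − 1|_p ≤ 1/p; i.e., x₀ is an attracting fixed point. -/
/-!
The derivative of `g(u) = a(b²u² + 1)/(b² + u²)` is `g'(u) = 2au(b⁴ − 1)/(b² + u²)²`. On the
open unit ball around `1` every element is a unit, and so is `2` for `p ≥ 3`; moreover
`b² + x₀² ≡ 2` modulo the maximal ideal. Hence `|g'(x₀)|_p = |b⁴ − 1|_p`, and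
`b⁴ − 1 = (b − 1)(b³ + b² + b + 1)` has norm at most `|b − 1|_p < 1`, i.e. at most `1/p`.
-/

open IsUltrametricDist

lemma IsUltrametricDist.norm_eq_of_norm_sub_lt {S : Type*} [SeminormedAddGroup S]
    [IsUltrametricDist S] {x y : S} (h : ‖x - y‖ < ‖y‖) : ‖x‖ = ‖y‖ := by
  simpa [max_eq_right h.le] using norm_add_eq_max_of_norm_ne_norm h.ne

section UltrametricField

variable {K : Type*} [NormedField K] [IsUltrametricDist K]

lemma IsUltrametricDist.norm_eq_one_of_norm_sub_one_lt_one {x : K} (h : ‖x - 1‖ < 1) :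
    ‖x‖ = 1 := by
  simpa using norm_eq_of_norm_sub_lt (y := (1 : K)) (by simpa using h)

lemma IsUltrametricDist.norm_pow_sub_one_le {x : K} (hx : ‖x‖ ≤ 1) (n : ℕ) :
    ‖x ^ n - 1‖ ≤ ‖x - 1‖ := by
  have hgeom : ‖∑ i ∈ Finset.range n, x ^ i‖ ≤ 1 :=
    norm_sum_le_of_forall_le_of_nonneg zero_le_one fun i _ => by
      simpa only [norm_pow] using pow_le_one₀ (norm_nonneg x) hx
  calc ‖x ^ n - 1‖ = ‖∑ i ∈ Finset.range n, x ^ i‖ * ‖x - 1‖ := by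
        rw [← geom_sum_mul, norm_mul]
    _ ≤ 1 * ‖x - 1‖ := by gcongr
    _ = ‖x - 1‖ := one_mul _

lemma IsUltrametricDist.norm_sq_add_sq_eq_one {x y : K} (h2 : ‖(2 : K)‖ = 1)
    (hx : ‖x - 1‖ < 1) (hy : ‖y - 1‖ < 1) : ‖x ^ 2 + y ^ 2‖ = 1 := by
  have hsq {z : K} (hz : ‖z - 1‖ < 1) : ‖z ^ 2 - 1‖ < 1 :=
    (norm_pow_sub_one_le (norm_eq_one_of_norm_sub_one_lt_one hz).le 2).trans_lt hz
  have hclose : ‖(x ^ 2 + y ^ 2) - 2‖ < ‖(2 : K)‖ := by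
    rw [h2, show (x ^ 2 + y ^ 2) - 2 = (x ^ 2 - 1) + (y ^ 2 - 1) by ring]
    exact (norm_add_le_max _ _).trans_lt (max_lt (hsq hx) (hsq hy))
  rw [norm_eq_of_norm_sub_lt hclose, h2]

end UltrametricField

lemma hasDerivAt_div_sq_add_sq {𝕜 : Type*} [NontriviallyNormedField 𝕜] (a b u : 𝕜)
    (hu : b ^ 2 + u ^ 2 ≠ 0) :
    HasDerivAt (fun u => a * (b ^ 2 * u ^ 2 + 1) / (b ^ 2 + u ^ 2))
      (2 * a * u * (b ^ 4 - 1) / (b ^ 2 + u ^ 2) ^ 2) u := by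
  have hnum : HasDerivAt (fun u => a * (b ^ 2 * u ^ 2 + 1)) (a * (b ^ 2 * (2 * u))) u := by
    simpa using (((hasDerivAt_pow 2 u).const_mul (b ^ 2)).add_const 1).const_mul a
  have hden : HasDerivAt (fun u => b ^ 2 + u ^ 2) (2 * u) u := by
    simpa using (hasDerivAt_pow 2 u).const_add (b ^ 2)
  exact (hnum.div hden hu).congr_deriv (by ring)

namespace Padic

variable {p : ℕ} [Fact p.Prime]

lemma norm_two_eq_one (hp : 3 ≤ p) : ‖(2 : ℚ_[p])‖ = 1 := by
  have hcop : p.Coprime 2 := (Nat.coprime_primes Fact.out Nat.prime_two).mpr (by omega)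
  exact_mod_cast norm_natCast_eq_one_iff.mpr hcop

lemma norm_le_inv_of_norm_lt_one {x : ℚ_[p]} (h : ‖x‖ < 1) : ‖x‖ ≤ (p : ℝ)⁻¹ := by
  simpa using (norm_le_pow_iff_norm_lt_pow_add_one x (-1)).mpr (by simpa using h)

end Padic

theorem stmt13_general (p : ℕ) [Fact p.Prime] (hp : 3 ≤ p) (a b : ℚ_[p])
    (ha : ‖a - 1‖ < 1) (hb : ‖b - 1‖ < 1) (x₀ : ℚ_[p])
    (hx0 : ‖x₀ - 1‖ < 1) :
    ‖deriv (fun u : ℚ_[p] => a * (b ^ 2 * u ^ 2 + 1) / (b ^ 2 + u ^ 2)) x₀‖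
      = ‖b ^ 4 - 1‖ ∧ ‖b ^ 4 - 1‖ ≤ (p : ℝ)⁻¹ := by
  have h2 := Padic.norm_two_eq_one hp
  have hden : ‖b ^ 2 + x₀ ^ 2‖ = 1 := norm_sq_add_sq_eq_one h2 hb hx0
  rw [(hasDerivAt_div_sq_add_sq a b x₀ (norm_ne_zero_iff.mp (by simp [hden]))).deriv]
  refine ⟨?_, ?_⟩
  · simp only [norm_div, norm_mul, norm_pow, h2, hden, norm_eq_one_of_norm_sub_one_lt_one ha,
      norm_eq_one_of_norm_sub_one_lt_one hx0]
    ring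
  · calc ‖b ^ 4 - 1‖ ≤ ‖b - 1‖ :=
          norm_pow_sub_one_le (norm_eq_one_of_norm_sub_one_lt_one hb).le 4
      _ ≤ (p : ℝ)⁻¹ := Padic.norm_le_inv_of_norm_lt_one hb

theorem stmt13 (p : ℕ) [Fact p.Prime] (hp : 3 ≤ p) (a b : ℚ_[p])
    (ha : ‖a - 1‖ < 1) (hb : ‖b - 1‖ < 1) (hb1 : b ≠ 1) (x₀ : ℚ_[p])
    (hx0 : ‖x₀ - 1‖ < 1)
    (hfix0 : a * (b ^ 2 * x₀ ^ 2 + 1) / (b ^ 2 + x₀ ^ 2) = x₀) :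
    ‖deriv (fun u : ℚ_[p] => a * (b ^ 2 * u ^ 2 + 1) / (b ^ 2 + u ^ 2)) x₀‖
      = ‖b ^ 4 - 1‖ ∧ ‖b ^ 4 - 1‖ ≤ (p : ℝ)⁻¹ :=
  stmt13_general p hp a b ha hb x₀ hx0
end

section
/- Let p be a prime with p ≡ 1 (mod 4), p ≥ 5, and let α ∈ ℚ_p satisfy α² = −1. Let b ∈ E_p with b ≠ 1, a ∈ E_p, r = |b − 1|_p, and g(u) = a(b²u² + 1)/(b² + u²). Then for all x, y in the open ball B_r(α) = {z : |z − α|_p < r}, one has |g(x) − g(y)|_p = |x − y|_p / r. -/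
/-!
Write `g(u) = a(b²u² + 1)/(b² + u²)`. Then
`g(x) - g(y) = a(b⁴ - 1)(x - y)(x + y)/((b² + x²)(b² + y²))`, and every factor except `x - y`
has a norm that the ultrametric inequality pins down: `‖a‖ = ‖x + y‖ = 1` since everything is
close to `1` or `α`, while `b² + x² = (b² - 1) + (x - α)(x + α)` is dominated by `b² - 1`, so
`‖b² + x²‖ = ‖b² - 1‖ = ‖b⁴ - 1‖ = ‖b - 1‖`. This leaves `‖x - y‖ · ‖b - 1‖ / ‖b - 1‖²`.
-/

lemma norm_eq_one_of_sq_eq_neg_one {K : Type*} [NormedDivisionRing K] {α : K}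
    (hα : α ^ 2 = -1) : ‖α‖ = 1 := by
  have : ‖α‖ ^ 2 = 1 := by rw [← norm_pow, hα, norm_neg, norm_one]
  exact (pow_eq_one_iff_of_nonneg (norm_nonneg α) two_ne_zero).mp this

lemma norm_add_eq_left_of_norm_lt {G : Type*} [SeminormedAddCommGroup G] [IsUltrametricDist G]
    {u v : G} (h : ‖v‖ < ‖u‖) : ‖u + v‖ = ‖u‖ := by
  rw [IsUltrametricDist.norm_add_eq_max_of_norm_ne_norm h.ne', max_eq_left h.le]

lemma norm_eq_of_norm_sub_lt {G : Type*} [SeminormedAddCommGroup G] [IsUltrametricDist G]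
    {u c : G} (h : ‖u - c‖ < ‖c‖) : ‖u‖ = ‖c‖ := by
  simpa using norm_add_eq_left_of_norm_lt h

section UltrametricField

variable {K : Type*} [NormedField K] [IsUltrametricDist K] {b c u v : K}

lemma norm_add_eq_one_of_norm_sub_lt_one (h2 : ‖(2 : K)‖ = 1) (hc : ‖c‖ = 1)
    (hu : ‖u - c‖ < 1) (hv : ‖v - c‖ < 1) : ‖u + v‖ = 1 := by
  have h2c : ‖2 * c‖ = 1 := by rw [norm_mul, h2, hc, one_mul]
  rw [← h2c]
  refine norm_eq_of_norm_sub_lt ?_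
  calc ‖u + v - 2 * c‖ = ‖(u - c) + (v - c)‖ := by ring_nf
    _ ≤ max ‖u - c‖ ‖v - c‖ := IsUltrametricDist.norm_add_le_max _ _
    _ < ‖2 * c‖ := by rw [h2c]; exact max_lt hu hv

lemma norm_sq_sub_sq_eq_norm_sub (h2 : ‖(2 : K)‖ = 1) (hc : ‖c‖ = 1) (hu : ‖u - c‖ < 1) :
    ‖u ^ 2 - c ^ 2‖ = ‖u - c‖ := by
  have hsum : ‖u + c‖ = 1 := norm_add_eq_one_of_norm_sub_lt_one h2 hc hu (by simp)
  rw [sq_sub_sq, norm_mul, hsum, one_mul]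

lemma norm_sq_sub_one_eq_norm_sub_one (h2 : ‖(2 : K)‖ = 1) (hb : ‖b - 1‖ < 1) :
    ‖b ^ 2 - 1‖ = ‖b - 1‖ := by
  simpa using norm_sq_sub_sq_eq_norm_sub h2 norm_one hb

lemma norm_pow_four_sub_one_eq_norm_sub_one (h2 : ‖(2 : K)‖ = 1) (hb : ‖b - 1‖ < 1) :
    ‖b ^ 4 - 1‖ = ‖b - 1‖ := by
  have hb2 := norm_sq_sub_one_eq_norm_sub_one h2 hb
  rw [show b ^ 4 = (b ^ 2) ^ 2 by ring, norm_sq_sub_one_eq_norm_sub_one h2 (hb2 ▸ hb), hb2]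

lemma norm_sq_add_sq_eq_norm_sub_one {α b x : K} (h2 : ‖(2 : K)‖ = 1) (hα : α ^ 2 = -1)
    (hb : ‖b - 1‖ < 1) (hx : ‖x - α‖ < ‖b - 1‖) : ‖b ^ 2 + x ^ 2‖ = ‖b - 1‖ := by
  have hx2 : ‖x ^ 2 + 1‖ = ‖x - α‖ := by
    rw [← norm_sq_sub_sq_eq_norm_sub h2 (norm_eq_one_of_sq_eq_neg_one hα) (hx.trans hb), hα,
      sub_neg_eq_add]
  have hb2 := norm_sq_sub_one_eq_norm_sub_one h2 hb
  rw [show b ^ 2 + x ^ 2 = (b ^ 2 - 1) + (x ^ 2 + 1) by ring,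
    norm_add_eq_left_of_norm_lt (by rwa [hb2, hx2]), hb2]

end UltrametricField

lemma moebius_sq_sub_moebius_sq {K : Type*} [Field K] {a b x y : K}
    (hx : b ^ 2 + x ^ 2 ≠ 0) (hy : b ^ 2 + y ^ 2 ≠ 0) :
    a * (b ^ 2 * x ^ 2 + 1) / (b ^ 2 + x ^ 2) - a * (b ^ 2 * y ^ 2 + 1) / (b ^ 2 + y ^ 2) =
      a * (b ^ 4 - 1) * (x - y) * (x + y) / ((b ^ 2 + x ^ 2) * (b ^ 2 + y ^ 2)) := by
  field_simp
  ring

lemma Padic.norm_two_eq_one_s17 {p : ℕ} [hp : Fact p.Prime] (hp2 : p ≠ 2) : ‖(2 : ℚ_[p])‖ = 1 := by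
  exact_mod_cast Padic.norm_natCast_eq_one_iff.mpr
    ((Nat.coprime_primes hp.out Nat.prime_two).mpr hp2)

theorem stmt17_general (p : ℕ) [Fact p.Prime] (hp : 5 ≤ p)
    (α : ℚ_[p]) (hα : α ^ 2 = -1) (a b : ℚ_[p])
    (ha : ‖a - 1‖ < 1) (hb : ‖b - 1‖ < 1) (x y : ℚ_[p])
    (hx : ‖x - α‖ < ‖b - 1‖) (hy : ‖y - α‖ < ‖b - 1‖) :
    ‖a * (b ^ 2 * x ^ 2 + 1) / (b ^ 2 + x ^ 2) -
      a * (b ^ 2 * y ^ 2 + 1) / (b ^ 2 + y ^ 2)‖ = ‖x - y‖ / ‖b - 1‖ := by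
  have hr : 0 < ‖b - 1‖ := (norm_nonneg _).trans_lt hx
  have h2 : ‖(2 : ℚ_[p])‖ = 1 := Padic.norm_two_eq_one_s17 (by omega)
  have hbx := norm_sq_add_sq_eq_norm_sub_one h2 hα hb hx
  have hby := norm_sq_add_sq_eq_norm_sub_one h2 hα hb hy
  have ha1 : ‖a‖ = 1 := norm_one (α := ℚ_[p]) ▸ norm_eq_of_norm_sub_lt (by rwa [norm_one])
  have hxy : ‖x + y‖ = 1 := norm_add_eq_one_of_norm_sub_lt_one h2
    (norm_eq_one_of_sq_eq_neg_one hα) (hx.trans hb) (hy.trans hb)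
  rw [moebius_sq_sub_moebius_sq (norm_pos_iff.mp (hbx ▸ hr)) (norm_pos_iff.mp (hby ▸ hr)),
    norm_div, norm_mul, norm_mul, norm_mul, norm_mul, ha1,
    norm_pow_four_sub_one_eq_norm_sub_one h2 hb, hxy, hbx, hby]
  field_simp

theorem stmt17 (p : ℕ) [Fact p.Prime] (hp : 5 ≤ p) (hp4 : p % 4 = 1)
    (α : ℚ_[p]) (hα : α ^ 2 = -1) (a b : ℚ_[p])
    (ha : ‖a - 1‖ < 1) (hb : ‖b - 1‖ < 1) (hb1 : b ≠ 1) (x y : ℚ_[p])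
    (hx : ‖x - α‖ < ‖b - 1‖) (hy : ‖y - α‖ < ‖b - 1‖) :
    ‖a * (b ^ 2 * x ^ 2 + 1) / (b ^ 2 + x ^ 2) -
      a * (b ^ 2 * y ^ 2 + 1) / (b ^ 2 + y ^ 2)‖ = ‖x - y‖ / ‖b - 1‖ :=
  stmt17_general p hp α hα a b ha hb x y hx hy
end
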